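/- For each formula φ of RPL(⊙) there exists a term t_φ of ℚ[ReLU, x_i]_{i∈ℕ} that is equivalent to φ. Moreover, for all d ∈ ℕ, if φ is a formula of RPL(⊙)_{≤d}, then t_φ can be taken with deg(t_φ) ≤ d. -/

import Mathlib

/-- Terms of ℚ[ReLU, x_i]_{i∈ℕ}; variables are indexed by ℕ. -/
inductive RTerm : Type where
  | const : ℚ → RTerm
  | var : ℕ → RTerm
  | add : RTerm → RTerm → RTerm
  | mul : RTerm → RTerm → RTerm
  | relu : RTerm → RTerm

/-- Value of a term under an evaluation map `E : ℕ → ℝ`. -/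
def RTerm.eval (E : ℕ → ℝ) : RTerm → ℝ
  | .const r => (r : ℝ)
  | .var x => E x
  | .add t t' => t.eval E + t'.eval E
  | .mul t t' => t.eval E * t'.eval E
  | .relu t => max 0 (t.eval E)

/-- Degree of a term. -/
def RTerm.deg : RTerm → ℕ
  | .const _ => 0
  | .var _ => 1
  | .add t t' => max t.deg t'.deg
  | .mul t t' => t.deg + t'.deg
  | .relu t => t.deg

/-- Subterms of a term. -/
def RTerm.subt : RTerm → List RTerm
  | .const r => [.const r]
  | .var x => [.var x]
  | .add t t' => t.subt ++ t'.subt ++ [.add t t']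
  | .mul t t' => t.subt ++ t'.subt ++ [.mul t t']
  | .relu t => t.subt ++ [.relu t]

/-- Proto-neurons. -/
inductive RTerm.ProtoNeuron : RTerm → Prop where
  | const (r : ℚ) : RTerm.ProtoNeuron (.const r)
  | var (x : ℕ) : RTerm.ProtoNeuron (.var x)
  | add {t t'} : RTerm.ProtoNeuron t → RTerm.ProtoNeuron t' → RTerm.ProtoNeuron (.add t t')
  | mul {t t'} : RTerm.ProtoNeuron t → RTerm.ProtoNeuron t' → t.deg + t'.deg ≤ 1 →
      RTerm.ProtoNeuron (.mul t t')
  | relu {t} : RTerm.ProtoNeuron t → RTerm.ProtoNeuron (.relu t)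

/-- `ReLU (w₁·n₁ + (w₂·n₂ + (⋯ + b)))`. -/
def layerNeuron (ws : List (ℚ × RTerm)) (b : ℚ) : RTerm :=
  .relu (ws.foldr (fun wt acc => .add (.mul (.const wt.1) wt.2) acc) (.const b))

/-- Rational-parameter ReLU-activated neural networks of a given depth,
identified with the tuples of their output neurons. -/
inductive IsNN : ℕ → List RTerm → Prop where
  | input (ys : List ℕ) : ys ≠ [] → ys.Nodup → IsNN 0 (ys.map RTerm.var)
  | layer {d : ℕ} {prev : List RTerm} (hprev : IsNN d prev)
      (params : List (List ℚ × ℚ)) (hne : params ≠ [])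
      (hlen : ∀ p ∈ params, p.1.length = prev.length) :
      IsNN (d + 1) (params.map fun p => layerNeuron (p.1.zip prev) p.2)

/-- A neuron is a component of some neural network. -/
def IsNeuron (t : RTerm) : Prop := ∃ d N, IsNN d N ∧ t ∈ N

/-- Formulae of RPL(⊙): truth constants r̄ for r ∈ ℚ ∩ [0,1], proposition
symbols, →_L and ⊙. -/
inductive RPLForm : Type where
  | const : {r : ℚ // 0 ≤ r ∧ r ≤ 1} → RPLForm
  | prop : ℕ → RPLForm
  | impL : RPLForm → RPLForm → RPLForm
  | conj : RPLForm → RPLForm → RPLForm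

/-- A valuation assigns to every proposition symbol a value in [0,1]. -/
def IsValuation (V : ℕ → ℝ) : Prop := ∀ p, 0 ≤ V p ∧ V p ≤ 1

/-- Truth value of an RPL(⊙)-formula under a valuation. -/
def RPLForm.val (V : ℕ → ℝ) : RPLForm → ℝ
  | .const r => (r.1 : ℝ)
  | .prop p => V p
  | .impL φ ψ => min 1 (1 - φ.val V + ψ.val V)
  | .conj φ ψ => φ.val V * ψ.val V

/-- Formulae with no proposition symbols. -/
def RPLForm.propFree : RPLForm → Prop
  | .const _ => True
  | .prop _ => False
  | .impL φ ψ => φ.propFree ∧ ψ.propFree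
  | .conj φ ψ => φ.propFree ∧ ψ.propFree

/-- RPL: the ⊙-free fragment of RPL(⊙). -/
def RPLForm.noConj : RPLForm → Prop
  | .const _ => True
  | .prop _ => True
  | .impL φ ψ => φ.noConj ∧ ψ.noConj
  | .conj _ _ => False

/-- Łukasiewicz logic: the only truth constant is 0̄ and there is no ⊙. -/
def RPLForm.isLuk : RPLForm → Prop
  | .const r => r.1 = 0
  | .prop _ => True
  | .impL φ ψ => φ.isLuk ∧ ψ.isLuk
  | .conj _ _ => False

/-- The fragment RPL(⊙)_{≤ n}. -/
inductive RPLForm.InFrag : ℕ → RPLForm → Prop where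
  | propfree {n φ} : RPLForm.propFree φ → RPLForm.InFrag n φ
  | prop {n} (p : ℕ) : RPLForm.InFrag (n + 1) (.prop p)
  | up {n φ} : RPLForm.InFrag n φ → RPLForm.InFrag (n + 1) φ
  | conj {n i j α β} : RPLForm.InFrag i α → RPLForm.InFrag j β → i + j ≤ n + 1 →
      RPLForm.InFrag (n + 1) (.conj α β)
  | impL {n φ ψ} : RPLForm.InFrag (n + 1) φ → RPLForm.InFrag (n + 1) ψ →
      RPLForm.InFrag (n + 1) (.impL φ ψ)

/-- Formulae of LΠ½. -/
inductive LPiForm : Type where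
  | zero : LPiForm
  | half : LPiForm
  | prop : ℕ → LPiForm
  | impL : LPiForm → LPiForm → LPiForm
  | conj : LPiForm → LPiForm → LPiForm
  | impP : LPiForm → LPiForm → LPiForm

/-- Truth value of an LΠ½-formula under a valuation. -/
noncomputable def LPiForm.val (V : ℕ → ℝ) : LPiForm → ℝ
  | .zero => 0
  | .half => 1 / 2
  | .prop p => V p
  | .impL φ ψ => min 1 (1 - φ.val V + ψ.val V)
  | .conj φ ψ => φ.val V * ψ.val V
  | .impP φ ψ => if φ.val V ≤ ψ.val V then 1 else ψ.val V / φ.val V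

/-- LΠ½-formulae with no proposition symbols (LΠ½_{≤0}). -/
def LPiForm.propFree : LPiForm → Prop
  | .zero => True
  | .half => True
  | .prop _ => False
  | .impL φ ψ => φ.propFree ∧ ψ.propFree
  | .conj φ ψ => φ.propFree ∧ ψ.propFree
  | .impP φ ψ => φ.propFree ∧ ψ.propFree

/-- LΠ½(→_P⁻): no proposition symbols in the scope of →_P. -/
inductive LPiForm.InPF : LPiForm → Prop where
  | base {φ} : LPiForm.propFree φ → LPiForm.InPF φ
  | prop (p : ℕ) : LPiForm.InPF (.prop p)
  | impL {φ ψ} : LPiForm.InPF φ → LPiForm.InPF ψ → LPiForm.InPF (.impL φ ψ)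
  | conj {φ ψ} : LPiForm.InPF φ → LPiForm.InPF ψ → LPiForm.InPF (.conj φ ψ)

/-- LΠ½(⊙⁻, →_P⁻): no proposition symbols in the scope of ⊙ or →_P. -/
inductive LPiForm.InPFF : LPiForm → Prop where
  | base {φ} : LPiForm.propFree φ → LPiForm.InPFF φ
  | prop (p : ℕ) : LPiForm.InPFF (.prop p)
  | impL {φ ψ} : LPiForm.InPFF φ → LPiForm.InPFF ψ → LPiForm.InPFF (.impL φ ψ)

/-- The fragment LΠ½(→_P⁻)_{≤ n}. -/
inductive LPiForm.InFragPF : ℕ → LPiForm → Prop where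
  | propfree {n φ} : LPiForm.propFree φ → LPiForm.InFragPF n φ
  | prop {n} (p : ℕ) : LPiForm.InFragPF (n + 1) (.prop p)
  | up {n φ} : LPiForm.InFragPF n φ → LPiForm.InFragPF (n + 1) φ
  | conj {n i j α β} : LPiForm.InFragPF i α → LPiForm.InFragPF j β → i + j ≤ n + 1 →
      LPiForm.InFragPF (n + 1) (.conj α β)
  | impL {n φ ψ} : LPiForm.InFragPF (n + 1) φ → LPiForm.InFragPF (n + 1) ψ →
      LPiForm.InFragPF (n + 1) (.impL φ ψ)

/-- scale_k(x) = (k + x)/(2k). -/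
noncomputable def scaleK (k x : ℝ) : ℝ := (k + x) / (2 * k)

/-- Equivalence of a term and an RPL(⊙)-formula (the bijection p ↦ x_p is
the identity on ℕ). -/
def TermFormEquiv (t : RTerm) (φ : RPLForm) : Prop :=
  ∀ (E V : ℕ → ℝ), IsValuation V → (∀ x, E x = V x) → t.eval E = φ.val V

/-- (i,k)-equivalence of a formula to a term. -/
def IKEquiv (i k : ℝ) (φ : RPLForm) (t : RTerm) : Prop :=
  ∀ E : ℕ → ℝ, (∀ x, -i ≤ E x ∧ E x ≤ i) →
    φ.val (fun p => scaleK k (E p)) = scaleK k (t.eval E)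

/-- k-equivalence of formulae. -/
def KEquiv (k : ℝ) (ψ φ : RPLForm) : Prop :=
  ∀ V V' : ℕ → ℝ, IsValuation V → IsValuation V' → (∀ p, V' p = scaleK k (V p)) →
    ψ.val V' = scaleK k (φ.val V)

/-- Equivalence of terms. -/
def TermEquiv (t t' : RTerm) : Prop := ∀ E : ℕ → ℝ, t.eval E = t'.eval E

/-- [0,1]-equivalence of terms. -/
def TermEquiv01 (t t' : RTerm) : Prop :=
  ∀ E : ℕ → ℝ, (∀ x, 0 ≤ E x ∧ E x ≤ 1) → t.eval E = t'.eval E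

/-- Equivalence of an RPL(⊙)-formula and an LΠ½-formula. -/
def RLEquiv (φ : RPLForm) (ψ : LPiForm) : Prop :=
  ∀ V : ℕ → ℝ, IsValuation V → φ.val V = ψ.val V

/-- The truth constant 0̄. -/
def RPLForm.zeroC : RPLForm := .const ⟨0, by norm_num⟩

/-- ¬_L φ := φ →_L 0̄. -/
def RPLForm.negL (φ : RPLForm) : RPLForm := φ.impL RPLForm.zeroC

/-- φ ⊕ ψ := ¬_L φ →_L ψ. -/
def RPLForm.oplus (φ ψ : RPLForm) : RPLForm := φ.negL.impL ψ

/-- φ ⊗ ψ := ¬_L (φ →_L ¬_L ψ). -/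
def RPLForm.otimes (φ ψ : RPLForm) : RPLForm := (φ.impL ψ.negL).negL

/-- φ ⊖ ψ := φ ⊗ ¬_L ψ  (semantics: max{0, V(φ) − V(ψ)}). -/
def RPLForm.ominus (φ ψ : RPLForm) : RPLForm := φ.otimes ψ.negL

/-- φ ⊕' ψ := (φ ⊖ ¼̄) ⊕ (ψ ⊖ ¼̄). -/
def RPLForm.oplus' (φ ψ : RPLForm) : RPLForm :=
  (φ.ominus (.const ⟨1/4, by norm_num⟩)).oplus (ψ.ominus (.const ⟨1/4, by norm_num⟩))

/-- The iterated sum ⨀_n. -/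
def RPLForm.bigOplus : ℕ → RPLForm → RPLForm
  | 0, _ => RPLForm.zeroC
  | n + 1, φ => (RPLForm.bigOplus n φ).oplus φ

/-- The iterated operator ⨀'_n; `Nat.clog 2 n` is the least j with n ≤ 2^j. -/
def RPLForm.bigOplus' : ℕ → RPLForm → RPLForm
  | 0, _ => .const ⟨1/2, by norm_num⟩
  | 1, φ => φ
  | n + 2, φ =>
      RPLForm.oplus' (RPLForm.bigOplus' (2 ^ (Nat.clog 2 (n + 2) - 1)) φ)
        (RPLForm.bigOplus' ((n + 2) - 2 ^ (Nat.clog 2 (n + 2) - 1)) φ)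
  termination_by n _ => n
  decreasing_by
  · have h := Nat.pow_pred_clog_lt_self (b := 2) (x := n + 2) (by norm_num) (by omega)
    rw [Nat.pred_eq_sub_one] at h
    first | exact h | omega | (simp_wf; omega)
  · have h1 : 0 < 2 ^ (Nat.clog 2 (n + 2) - 1) := Nat.pow_pos (by norm_num)
    first | omega | (simp_wf; omega)

theorem inv2k_mem (k : ℕ) (hk : 1 ≤ k) : 0 ≤ (1 / (2 * (k : ℚ))) ∧ (1 / (2 * (k : ℚ))) ≤ 1 := by
  have h : (1 : ℚ) ≤ (k : ℚ) := by exact_mod_cast hk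
  constructor
  · positivity
  · rw [div_le_one (by linarith)]
    linarith

/-- φ ⊙^k ψ := ⨀_k((⨀_2(φ ⊙ ψ) ⊕ (1/(2k))̄) ⊖ (φ ⊕' ψ)). -/
def RPLForm.odotPow (k : ℕ) (hk : 1 ≤ k) (φ ψ : RPLForm) : RPLForm :=
  RPLForm.bigOplus k
    (((RPLForm.bigOplus 2 (φ.conj ψ)).oplus
        (.const ⟨1 / (2 * (k : ℚ)), inv2k_mem k hk⟩)).ominus (φ.oplus' ψ))

lemma frag_prop_pos {d p} (h : RPLForm.InFrag d (.prop p)) : 1 ≤ d := by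
  cases h with
  | propfree h => exact absurd h (by simp [RPLForm.propFree])
  | prop => omega
  | up => omega

lemma frag_impL {d φ ψ} (h : RPLForm.InFrag d (.impL φ ψ)) :
    RPLForm.InFrag d φ ∧ RPLForm.InFrag d ψ := by
  induction d with
  | zero =>
    cases h with
    | propfree h => exact ⟨.propfree h.1, .propfree h.2⟩
  | succ n ih =>
    cases h with
    | propfree h => exact ⟨.propfree h.1, .propfree h.2⟩
    | up h => exact ⟨.up (ih h).1, .up (ih h).2⟩
    | impL h1 h2 => exact ⟨h1, h2⟩

lemma frag_conj {d α β} (h : RPLForm.InFrag d (.conj α β)) :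
    ∃ i j, RPLForm.InFrag i α ∧ RPLForm.InFrag j β ∧ i + j ≤ d := by
  induction d with
  | zero =>
    cases h with
    | propfree h => exact ⟨0, 0, .propfree h.1, .propfree h.2, by omega⟩
  | succ n ih =>
    cases h with
    | propfree h => exact ⟨0, 0, .propfree h.1, .propfree h.2, by omega⟩
    | up h =>
      obtain ⟨i, j, h1, h2, hij⟩ := ih h
      exact ⟨i, j, h1, h2, by omega⟩
    | conj h1 h2 hij => exact ⟨_, _, h1, h2, hij⟩

lemma minmax_eq (a b : ℝ) : min 1 (1 - a + b) = 1 + (-1) * max 0 (a + (-1) * b) := by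
  rcases le_total a b with h | h
  · rw [max_eq_left (by linarith), min_eq_left (by linarith)]; ring
  · rw [max_eq_right (by linarith), min_eq_right (by linarith)]; ring

/-- translation from RPL(⊙) to terms, with degree bound. -/
theorem logic_to_terms (φ : RPLForm) :
    ∃ t : RTerm, TermFormEquiv t φ ∧ ∀ d : ℕ, RPLForm.InFrag d φ → t.deg ≤ d := by
  induction φ with
  | const r =>
    exact ⟨.const r.1, fun E V _ _ => rfl, fun d _ => by simp [RTerm.deg]⟩
  | prop p =>
    refine ⟨.var p, fun E V _ hEV => hEV p, fun d hd => ?_⟩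
    simpa [RTerm.deg] using frag_prop_pos hd
  | impL φ ψ ihφ ihψ =>
    obtain ⟨tφ, hφ, hdφ⟩ := ihφ
    obtain ⟨tψ, hψ, hdψ⟩ := ihψ
    refine ⟨.add (.const 1) (.mul (.const (-1))
      (.relu (.add tφ (.mul (.const (-1)) tψ)))), ?_, ?_⟩
    · intro E V hV hEV
      simp only [RTerm.eval, RPLForm.val, hφ E V hV hEV, hψ E V hV hEV]
      rw [minmax_eq]
      norm_num
    · intro d hd
      obtain ⟨h1, h2⟩ := frag_impL hd
      have := hdφ d h1
      have := hdψ d h2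
      simp only [RTerm.deg]
      omega
  | conj φ ψ ihφ ihψ =>
    obtain ⟨tφ, hφ, hdφ⟩ := ihφ
    obtain ⟨tψ, hψ, hdψ⟩ := ihψ
    refine ⟨.mul tφ tψ, ?_, ?_⟩
    · intro E V hV hEV
      simp only [RTerm.eval, RPLForm.val, hφ E V hV hEV, hψ E V hV hEV]
    · intro d hd
      obtain ⟨i, j, h1, h2, hij⟩ := frag_conj hd
      have := hdφ i h1
      have := hdψ j h2
      simp only [RTerm.deg]
      omega
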